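/- For every positive integer n, Σ_{k=1}^{n} C(2n, n−k) · k^9 = (n^2 / 2) · C(2n, n) · (24n^3 − 60n^2 + 54n − 17). -/

import Mathlib

/-!
Gosper's algorithm finds a hypergeometric antidifference for `C(2n, n + k) k⁹`: the tail sum
`∑_{j ≥ k} C(2n, n + j) j⁹` equals `Q(n, k) C(2n, n + k)` for an explicit polynomial `Q`.
Writing `C(2n, n - k) = C(2n, n + k)`, the sum over `1 ≤ k ≤ n` telescopes to the value at
`k = 1`, and `C(2n, n + 1) (n + 1) = C(2n, n) n` turns it into the stated closed form.
-/

open Finset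

lemma cast_choose_succ_mul (N j : ℕ) :
    (N.choose (j + 1) : ℝ) * (j + 1) = N.choose j * ((N : ℝ) - j) := by
  rcases le_or_gt j N with hj | hj
  · have := congrArg (fun m : ℕ => (m : ℝ)) (Nat.choose_succ_right_eq N j)
    push_cast [Nat.cast_sub hj] at this
    exact this
  · simp [Nat.choose_eq_zero_of_lt hj, Nat.choose_eq_zero_of_lt (Nat.lt_succ_of_lt hj)]

noncomputable def tailPoly (n k : ℝ) : ℝ :=
  (12 * n ^ 5 - 30 * n ^ 4 + 27 * n ^ 3 - 17 / 2 * n ^ 2)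
  + (12 * n ^ 4 - 36 * n ^ 3 + 44 * n ^ 2 - 27 * n + 17 / 2) * k ^ 2
  + (6 * n ^ 3 - 19 * n ^ 2 + 24 * n - 14) * k ^ 4
  + (2 * n ^ 2 - 6 * n + 7) * k ^ 6
  + (n / 2 - 2) * k ^ 8 + k ^ 9 / 2

noncomputable def tailSum (n k : ℕ) : ℝ :=
  tailPoly n k * (2 * n).choose (n + k)

lemma tailSum_sub_tailSum_succ (n k : ℕ) :
    tailSum n k - tailSum n (k + 1) = (2 * n).choose (n + k) * (k : ℝ) ^ 9 := by
  have hrec : ((2 * n).choose (n + k + 1) : ℝ) * (n + k + 1)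
      = (2 * n).choose (n + k) * ((n : ℝ) - k) := by
    have := cast_choose_succ_mul (2 * n) (n + k)
    push_cast at this
    linarith
  apply mul_right_cancel₀ (by positivity : (n : ℝ) + k + 1 ≠ 0)
  simp only [tailSum, sub_mul, mul_assoc, ← add_assoc, Nat.cast_add, Nat.cast_one, hrec]
  unfold tailPoly
  ring

lemma tailSum_of_lt {n k : ℕ} (hk : n < k) : tailSum n k = 0 := by
  simp [tailSum, Nat.choose_eq_zero_of_lt (by omega : 2 * n < n + k)]

lemma choose_symm_sub_eq_add {n k : ℕ} (hk : k ≤ n) :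
    (2 * n).choose (n - k) = (2 * n).choose (n + k) :=
  Nat.choose_symm_of_eq_add (by omega)

lemma sum_Icc_choose_mul_pow_nine_eq_tailSum (n : ℕ) :
    ∑ k ∈ Icc 1 n, ((2 * n).choose (n - k) : ℝ) * (k : ℝ) ^ 9 = tailSum n 1 :=
  calc ∑ k ∈ Icc 1 n, ((2 * n).choose (n - k) : ℝ) * (k : ℝ) ^ 9
      = -∑ k ∈ Ico 1 (n + 1), (tailSum n (k + 1) - tailSum n k) := by
        rw [← sum_neg_distrib, ← Ico_add_one_right_eq_Icc]
        refine sum_congr rfl fun k hk => ?_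
        rw [neg_sub, tailSum_sub_tailSum_succ,
          choose_symm_sub_eq_add (by simp at hk; omega)]
    _ = tailSum n 1 := by
        rw [sum_Ico_sub _ (by omega), tailSum_of_lt (by omega)]
        ring

theorem A_nine_eval (n : ℕ) :
    ∑ k ∈ Finset.Icc 1 n, (((2 * n).choose (n - k) : ℝ)) * (k : ℝ) ^ 9 =
      ((n : ℝ) ^ 2 / 2) * (((2 * n).choose n : ℝ)) *
        (24 * (n : ℝ) ^ 3 - 60 * (n : ℝ) ^ 2 + 54 * (n : ℝ) - 17) := by
  have hcentral : ((2 * n).choose (n + 1) : ℝ) * (n + 1) = (2 * n).choose n * n := by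
    have := cast_choose_succ_mul (2 * n) n
    push_cast at this
    linarith
  rw [sum_Icc_choose_mul_pow_nine_eq_tailSum]
  apply mul_right_cancel₀ (by positivity : (n : ℝ) + 1 ≠ 0)
  simp only [tailSum, Nat.cast_one, mul_assoc, hcentral]
  unfold tailPoly
  ring
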